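/- For every one-way deterministic one-counter automaton (1D1CA) M over the alphabet {0,#}, there exist positive even integers a, b, a', b' with (a,b) ≠ (a',b') such that the configuration of M reached after reading ¢0^a#0^b# equals the configuration of M reached after reading ¢0^{a'}#0^{b'}#. -/

import Mathlib

/-- Input symbols extended with the left (`cent`) and right (`dollar`) end-markers. -/
inductive TSym (α : Type) : Type
  | cent : TSym α
  | letter : α → TSym α
  | dollar : TSym α

/-- The tape content `¢ w $` for an input word `w`. -/
def tagged {α : Type} (w : List α) : List (TSym α) :=
  TSym.cent :: (w.map TSym.letter ++ [TSym.dollar])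

/-- A one-way deterministic one-counter automaton. -/
structure OneD1CA (α : Type) where
  Q : Type
  [fintypeQ : Fintype Q]
  [decQ : DecidableEq Q]
  q0 : Q
  acc : Set Q
  m : ℕ
  δ : Q → TSym α → Bool → Q × ℤ
  bound : ∀ q σ z, |(δ q σ z).2| ≤ (m : ℤ)

attribute [instance] OneD1CA.fintypeQ OneD1CA.decQ

namespace OneD1CA

variable {α : Type} (M : OneD1CA α)

/-- One computation step on a configuration (state, counter value). -/
def step (p : M.Q × ℤ) (σ : TSym α) : M.Q × ℤ :=
  ((M.δ p.1 σ (decide (p.2 = 0))).1, p.2 + (M.δ p.1 σ (decide (p.2 = 0))).2)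

/-- Configuration reached from the initial configuration after reading a list of tape symbols. -/
def confAfter (l : List (TSym α)) : M.Q × ℤ :=
  l.foldl M.step (M.q0, 0)

/-- The automaton accepts `w` iff the state after reading `¢ w $` is accepting. -/
def accepts (w : List α) : Prop :=
  (M.confAfter (tagged w)).1 ∈ M.acc

/-- The automaton recognizes the language `L` if it accepts exactly the members of `L`. -/
def recognizes (L : Set (List α)) : Prop :=
  ∀ w : List α, M.accepts w ↔ w ∈ L

end OneD1CA

/-- The alphabet `{0, #}` (`z` is the symbol `0`, `h` is the symbol `#`). -/
inductive XSym : Type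
  | z : XSym
  | h : XSym
deriving DecidableEq

/-- The block `0^n`. -/
def zeros (n : ℕ) : List XSym := List.replicate n XSym.z

/-- The string `0^a # 0^b # 0^c # 0^d # 0^{k1} # 0^{k2} # 0^{l1} # 0^{l2}`. -/
def xweWord (a b c d k1 k2 l1 l2 : ℕ) : List XSym :=
  zeros a ++ [XSym.h] ++ zeros b ++ [XSym.h] ++ zeros c ++ [XSym.h] ++ zeros d ++ [XSym.h] ++
    zeros k1 ++ [XSym.h] ++ zeros k2 ++ [XSym.h] ++ zeros l1 ++ [XSym.h] ++ zeros l2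

/-- `(-1) ^ [u = v]`. -/
def xweSign (u v : ℕ) : ℤ := if u = v then -1 else 1

/-- The promise of the problem `XOR-EQ`. -/
def xwePromise (a b c d k1 k2 l1 l2 : ℕ) : Prop :=
  0 < a ∧ Even a ∧ 0 < b ∧ Even b ∧ 0 < c ∧ Even c ∧ 0 < d ∧ Even d ∧
    (a : ℤ) - (c : ℤ) + xweSign a c * ((k1 : ℤ) - (k2 : ℤ)) =
      (b : ℤ) - (d : ℤ) + xweSign b d * ((l1 : ℤ) - (l2 : ℤ))

/-- Yes-instances of `XOR-EQ`: promised strings where exactly one of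
`a = c`, `b = d` holds. -/
def XorEqYes : Set (List XSym) :=
  {w | ∃ a b c d k1 k2 l1 l2 : ℕ, xwePromise a b c d k1 k2 l1 l2 ∧
    Xor' (a = c) (b = d) ∧ w = xweWord a b c d k1 k2 l1 l2}

/-- No-instances of `XOR-EQ`: the remaining promised strings. -/
def XorEqNo : Set (List XSym) :=
  {w | ∃ a b c d k1 k2 l1 l2 : ℕ, xwePromise a b c d k1 k2 l1 l2 ∧
    ¬ Xor' (a = c) (b = d) ∧ w = xweWord a b c d k1 k2 l1 l2}

/-- The partial input `0^a # 0^b #`. -/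
def prefixAB (a b : ℕ) : List XSym :=
  zeros a ++ [XSym.h] ++ zeros b ++ [XSym.h]


/-!
The counter moves by at most `m` per symbol, so after reading `¢0^a#0^b#` with `a, b ≤ 2K` the
counter lies in `[-m(4K+3), m(4K+3)]`: there are only `O(K)` reachable configurations but `K²`
such prefixes with `a, b` positive and even. For `K = |Q|(8m+7)` the pigeonhole principle
yields two distinct prefixes with the same configuration.
-/

namespace OneD1CA

variable {α : Type} (M : OneD1CA α)

lemma abs_foldl_step_le (l : List (TSym α)) (p : M.Q × ℤ) :
    |(l.foldl M.step p).2| ≤ |p.2| + M.m * l.length := by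
  induction l generalizing p with
  | nil => simp
  | cons σ l ih =>
    have hstep : |(M.step p σ).2| ≤ |p.2| + M.m :=
      (abs_add_le _ _).trans (add_le_add_right (M.bound _ _ _) _)
    have := ih (M.step p σ)
    simp only [List.foldl_cons, List.length_cons, Nat.cast_add, Nat.cast_one]
    linarith

lemma abs_confAfter_le (l : List (TSym α)) : |(M.confAfter l).2| ≤ M.m * l.length := by
  simpa [confAfter] using M.abs_foldl_step_le l (M.q0, 0)

noncomputable def boundedConfs (B : ℕ) : Finset (M.Q × ℤ) :=
  Finset.univ ×ˢ Finset.Icc (-(B : ℤ)) B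

lemma card_boundedConfs (B : ℕ) :
    (M.boundedConfs B).card = Fintype.card M.Q * (2 * B + 1) := by
  rw [boundedConfs, Finset.card_product, Finset.card_univ, Int.card_Icc]
  congr 1
  omega

lemma confAfter_mem_boundedConfs {l : List (TSym α)} {n : ℕ} (hl : l.length ≤ n) :
    M.confAfter l ∈ M.boundedConfs (M.m * n) := by
  have hcounter : |(M.confAfter l).2| ≤ ((M.m * n : ℕ) : ℤ) := by
    push_cast
    exact (M.abs_confAfter_le l).trans (by gcongr)
  simpa [boundedConfs] using abs_le.mp hcounter

theorem exists_ne_confAfter_eq {ι : Type*} {s : Finset ι} {w : ι → List (TSym α)} {n : ℕ}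
    (hw : ∀ i ∈ s, (w i).length ≤ n)
    (hcard : Fintype.card M.Q * (2 * (M.m * n) + 1) < s.card) :
    ∃ i ∈ s, ∃ j ∈ s, i ≠ j ∧ M.confAfter (w i) = M.confAfter (w j) :=
  Finset.exists_ne_map_eq_of_card_lt_of_maps_to (t := M.boundedConfs (M.m * n))
    (by rwa [card_boundedConfs]) fun i hi => M.confAfter_mem_boundedConfs (hw i hi)

end OneD1CA

lemma length_prefixAB (a b : ℕ) : (prefixAB a b).length = a + b + 2 := by
  simp [prefixAB, zeros]
  ring

lemma mul_two_mul_add_one_lt_sq {q m : ℕ} (hq : 0 < q) :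
    q * (2 * (m * (4 * (q * (8 * m + 7)) + 3)) + 1) < (q * (8 * m + 7)) * (q * (8 * m + 7)) := by
  nlinarith [Nat.mul_le_mul_left (8 * m + 7) hq]

/-- for every 1D1CA there are two distinct partial inputs
`¢ 0^a # 0^b #` and `¢ 0^{a'} # 0^{b'} #` (all exponents positive and even)
leading to the same configuration. -/
theorem stmt2 (M : OneD1CA XSym) :
    ∃ a b a' b' : ℕ,
      0 < a ∧ Even a ∧ 0 < b ∧ Even b ∧ 0 < a' ∧ Even a' ∧ 0 < b' ∧ Even b' ∧
      (a, b) ≠ (a', b') ∧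
      M.confAfter (TSym.cent :: (prefixAB a b).map TSym.letter) =
        M.confAfter (TSym.cent :: (prefixAB a' b').map TSym.letter) := by
  set K := Fintype.card M.Q * (8 * M.m + 7)
  have hcard : Fintype.card M.Q * (2 * (M.m * (4 * K + 3)) + 1) <
      (Finset.Icc 1 K ×ˢ Finset.Icc 1 K).card := by
    simpa using mul_two_mul_add_one_lt_sq (m := M.m) (Fintype.card_pos_iff.mpr ⟨M.q0⟩)
  obtain ⟨⟨i, j⟩, hij, ⟨i', j'⟩, hij', hne, heq⟩ := M.exists_ne_confAfter_eq
    (w := fun ij => TSym.cent :: (prefixAB (2 * ij.1) (2 * ij.2)).map TSym.letter)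
    (fun ij hij => by
      simp only [Finset.mem_product, Finset.mem_Icc] at hij
      simp [length_prefixAB]
      omega) hcard
  simp only [Finset.mem_product, Finset.mem_Icc] at hij hij'
  refine ⟨2 * i, 2 * j, 2 * i', 2 * j', by omega, even_two_mul i, by omega, even_two_mul j,
    by omega, even_two_mul i', by omega, even_two_mul j', ?_, heq⟩
  simp only [ne_eq, Prod.mk.injEq] at hne ⊢
  omega
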